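/- arXiv:math/0510135 — 2 statements merged into one kernel-verified Lean document; each statement's English description precedes it below -/
import Mathlib

section
/- In an n-model, for i ≥ j ≥ k ≥ l the projections P_{(ij)} satisfy: (1) P_{(ij)}q_{k+} = 0; (2) q_{i−}P_{(jk)} = 0; (3) P_{(ij)}P_{(kl)} = 0; (4) P_{(ik)}P_{(jk)} = P_{(jk)}; (5) P_{(ij)}P_{(ik)} = P_{(ij)}; (6) P_{(jk)}P_{(ij)} = 0. -/
open ContinuousLinearMap

/-- The orthogonal projection onto the closure of a submodule, as an operator `H →L[ℂ] H`. -/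
noncomputable def orthProjCl {H : Type*} [NormedAddCommGroup H] [InnerProductSpace ℂ H]
    [CompleteSpace H] (S : Submodule ℂ H) : H →L[ℂ] H :=
  haveI : CompleteSpace S.topologicalClosure :=
    S.isClosed_topologicalClosure.completeSpace_coe
  S.topologicalClosure.subtypeL ∘L S.topologicalClosure.orthogonalProjectionOnto

section

variable {ι : Type*} [LinearOrder ι]
  {H : Type*} [NormedAddCommGroup H] [InnerProductSpace ℂ H] [CompleteSpace H]
  {E : ι → Type*} [∀ r, NormedAddCommGroup (E r)] [∀ r, InnerProductSpace ℂ (E r)]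
  [∀ r, CompleteSpace (E r)]

/-- `q_r = W_r p_r W_r*` -/
noncomputable def qmap (W : ∀ r, E r →L[ℂ] H) (p : ∀ r, E r →L[ℂ] E r) (r : ι) : H →L[ℂ] H :=
  W r ∘L p r ∘L adjoint (W r)

/-- The model projection `P_{(ij)} = P_{π_i∨…∨π_j}(I − q_{j+})(I − q_{i−})`. -/
noncomputable def Pmodel (W : ∀ r, E r →L[ℂ] H) (pPlus pMinus : ∀ r, E r →L[ℂ] E r)
    (i j : ι) : H →L[ℂ] H :=
  orthProjCl (⨆ r ∈ Set.Icc j i, LinearMap.range (W r : E r →ₗ[ℂ] H)) ∘L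
    (1 - qmap W pPlus j) ∘L (1 - qmap W pMinus i)

end

section AuxProj
variable {H : Type*} [NormedAddCommGroup H] [InnerProductSpace ℂ H] [CompleteSpace H]

lemma orthProjCl_apply_mem (S : Submodule ℂ H) (v : H) :
    orthProjCl S v ∈ S.topologicalClosure := by
  haveI : CompleteSpace S.topologicalClosure :=
    S.isClosed_topologicalClosure.completeSpace_coe
  exact (S.topologicalClosure.orthogonalProjectionOnto v).2

lemma orthProjCl_eq_self {S : Submodule ℂ H} {v : H} (hv : v ∈ S.topologicalClosure) :
    orthProjCl S v = v := by
  haveI : CompleteSpace S.topologicalClosure :=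
    S.isClosed_topologicalClosure.completeSpace_coe
  have h := (Submodule.starProjection_eq_self_iff (K := S.topologicalClosure)).2 hv
  rw [Submodule.starProjection_apply] at h
  exact h

lemma sub_orthProjCl_mem (S : Submodule ℂ H) (v : H) :
    v - orthProjCl S v ∈ S.topologicalClosureᗮ := by
  haveI : CompleteSpace S.topologicalClosure :=
    S.isClosed_topologicalClosure.completeSpace_coe
  have h := Submodule.sub_starProjection_mem_orthogonal (K := S.topologicalClosure) v
  rw [Submodule.starProjection_apply] at h
  exact h

lemma mem_orthogonal_topologicalClosure {S : Submodule ℂ H} {v : H} (hv : v ∈ Sᗮ) :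
    v ∈ S.topologicalClosureᗮ := by
  rw [Submodule.mem_orthogonal]
  intro u hu
  have h1 : S.topologicalClosure ≤ Sᗮᗮ :=
    Submodule.topologicalClosure_minimal _ S.le_orthogonal_orthogonal Sᗮ.isClosed_orthogonal
  exact Submodule.inner_left_of_mem_orthogonal hv (h1 hu)

lemma orthProjCl_eq_zero {S : Submodule ℂ H} {v : H} (hv : v ∈ Sᗮ) :
    orthProjCl S v = 0 := by
  haveI : CompleteSpace S.topologicalClosure :=
    S.isClosed_topologicalClosure.completeSpace_coe
  have h := Submodule.orthogonalProjectionOnto_apply_of_mem_orthogonal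
    (mem_orthogonal_topologicalClosure hv)
  simp [orthProjCl, h]

lemma orthProjCl_congr_comp {F : Type*} [NormedAddCommGroup F] [NormedSpace ℂ F]
    {S : Submodule ℂ H} {A B : H →L[ℂ] F} (h : S ≤ LinearMap.ker ((A - B : H →L[ℂ] F) : H →ₗ[ℂ] F)) (v : H) :
    A (orthProjCl S v) = B (orthProjCl S v) := by
  have hker : S.topologicalClosure ≤ LinearMap.ker ((A - B : H →L[ℂ] F) : H →ₗ[ℂ] F) :=
    Submodule.topologicalClosure_minimal _ h (ContinuousLinearMap.isClosed_ker (A - B))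
  have h2 := hker (orthProjCl_apply_mem S v)
  rw [LinearMap.mem_ker] at h2
  have h3 : A (orthProjCl S v) - B (orthProjCl S v) = 0 := h2
  exact sub_eq_zero.mp h3

end AuxProj

set_option maxHeartbeats 2000000 in
/-- In an n-model, for `i ≥ j ≥ k ≥ l` the projections `P_{(ij)}` satisfy
(1) `P_{(ij)}q_{k+} = 0`; (2) `q_{i−}P_{(jk)} = 0`; (3) `P_{(ij)}P_{(kl)} = 0`;
(4) `P_{(ik)}P_{(jk)} = P_{(jk)}`; (5) `P_{(ij)}P_{(ik)} = P_{(ij)}`;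
(6) `P_{(jk)}P_{(ij)} = 0`. -/
theorem model_Pij_product_relations
    {ι : Type*} [LinearOrder ι]
    {H : Type*} [NormedAddCommGroup H] [InnerProductSpace ℂ H] [CompleteSpace H]
    {E : ι → Type*} [∀ r, NormedAddCommGroup (E r)] [∀ r, InnerProductSpace ℂ (E r)]
    [∀ r, CompleteSpace (E r)]
    (W : ∀ r, E r →L[ℂ] H) (pPlus pMinus : ∀ r, E r →L[ℂ] E r)
    (hiso : ∀ r, ∀ x, ‖W r x‖ = ‖x‖)
    (hsum : ∀ r, pPlus r + pMinus r = 1)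
    (hidemP : ∀ r, pPlus r ∘L pPlus r = pPlus r)
    (hidemM : ∀ r, pMinus r ∘L pMinus r = pMinus r)
    (hana : ∀ i j, j ≤ i → pMinus i ∘L (adjoint (W i) ∘L W j) ∘L pPlus j = 0)
    (hmod : ∀ i j k, k ≤ j → j ≤ i →
      adjoint (W i) ∘L W k = (adjoint (W i) ∘L W j) ∘L (adjoint (W j) ∘L W k))
    (i j k l : ι) (hji : j ≤ i) (hkj : k ≤ j) (hlk : l ≤ k) :
    Pmodel W pPlus pMinus i j ∘L qmap W pPlus k = 0
      ∧ qmap W pMinus i ∘L Pmodel W pPlus pMinus j k = 0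
      ∧ Pmodel W pPlus pMinus i j ∘L Pmodel W pPlus pMinus k l = 0
      ∧ Pmodel W pPlus pMinus i k ∘L Pmodel W pPlus pMinus j k
          = Pmodel W pPlus pMinus j k
      ∧ Pmodel W pPlus pMinus i j ∘L Pmodel W pPlus pMinus i k
          = Pmodel W pPlus pMinus i j
      ∧ Pmodel W pPlus pMinus j k ∘L Pmodel W pPlus pMinus i j = 0 := by
  -- pointwise consequences of the axioms
  have hW1 : ∀ r (u : E r), adjoint (W r) (W r u) = u := by
    intro r u
    have h := (norm_map_iff_adjoint_comp_self (W r)).1 (hiso r)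
    calc adjoint (W r) (W r u) = (adjoint (W r) ∘L W r) u := rfl
      _ = u := by rw [h]; rfl
  have hsum' : ∀ r (u : E r), pPlus r u + pMinus r u = u := by
    intro r u
    have h := ContinuousLinearMap.ext_iff.mp (hsum r) u
    simpa using h
  have hMsub : ∀ r (u : E r), pMinus r u = u - pPlus r u := by
    intro r u
    rw [eq_sub_iff_add_eq, add_comm]
    exact hsum' r u
  have hidemP' : ∀ r (u : E r), pPlus r (pPlus r u) = pPlus r u := by
    intro r u
    simpa [ContinuousLinearMap.comp_apply] using ContinuousLinearMap.ext_iff.mp (hidemP r) u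
  have hidemM' : ∀ r (u : E r), pMinus r (pMinus r u) = pMinus r u := by
    intro r u
    simpa [ContinuousLinearMap.comp_apply] using ContinuousLinearMap.ext_iff.mp (hidemM r) u
  have hpmp : ∀ r (u : E r), pMinus r (pPlus r u) = 0 := by
    intro r u
    rw [hMsub r (pPlus r u), hidemP', sub_self]
  have g6 : ∀ r (u : E r), pMinus r u = 0 → pPlus r u = u := by
    intro r u h
    have h2 := hsum' r u
    rw [h, add_zero] at h2
    exact h2
  have hana' : ∀ a b, b ≤ a → ∀ u : E b, pMinus a (adjoint (W a) (W b (pPlus b u))) = 0 := by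
    intro a b h u
    simpa [ContinuousLinearMap.comp_apply] using ContinuousLinearMap.ext_iff.mp (hana a b h) u
  have g2 : ∀ b (x : H),
      pMinus b (adjoint (W b) (x - W b (pMinus b (adjoint (W b) x)))) = 0 := by
    intro b x
    rw [map_sub, map_sub, hW1, hidemM', sub_self]
  have g1 : ∀ a (v : H),
      pPlus a (adjoint (W a) (v - W a (pPlus a (adjoint (W a) v)))) = 0 := by
    intro a v
    rw [map_sub, map_sub, hW1, hidemP', sub_self]
  have g3 : ∀ a c, c ≤ a → ∀ (v : H) (u : E c),
      pMinus a (adjoint (W a) (v - W c (pPlus c u))) = pMinus a (adjoint (W a) v) := by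
    intro a c hca v u
    rw [map_sub, map_sub, hana' a c hca u, sub_zero]
  have g4 : ∀ a b, b ≤ a → ∀ u : E b, pMinus b u = 0 →
      pMinus a (adjoint (W a) (W b u)) = 0 := by
    intro a b hba u hu
    have h1 : u = pPlus b u := (g6 b u hu).symm
    have h2 := hana' a b hba u
    rwa [← h1] at h2
  have hKeyM : ∀ b c, c ≤ b → ∀ x : H,
      pMinus b (adjoint (W b) (x - W b (pMinus b (adjoint (W b) x))
        - W c (pPlus c (adjoint (W c) (x - W b (pMinus b (adjoint (W b) x))))))) = 0 := by
    intro b c hcb x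
    rw [g3 b c hcb]
    exact g2 b x
  have hmodp : ∀ a b c, c ≤ b → b ≤ a → ∀ u : E c,
      adjoint (W a) (W c u) = adjoint (W a) (W b (adjoint (W b) (W c u))) := by
    intro a b c hcb hba u
    simpa [ContinuousLinearMap.comp_apply] using
      ContinuousLinearMap.ext_iff.mp (hmod a b c hcb hba) u
  have hmodq : ∀ a b c, a ≤ b → b ≤ c → ∀ u : E c,
      adjoint (W a) (W c u) = adjoint (W a) (W b (adjoint (W b) (W c u))) := by
    intro a b c hab hbc u
    have h3 := congrArg ContinuousLinearMap.adjoint (hmod c b a hab hbc)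
    simp only [adjoint_comp, adjoint_adjoint] at h3
    simpa [ContinuousLinearMap.comp_apply] using ContinuousLinearMap.ext_iff.mp h3 u
  -- projection facts specialized to the sup-ranges
  have hmemS : ∀ a b r, a ≤ r → r ≤ b → ∀ z : E r,
      W r z ∈ (⨆ s ∈ Set.Icc a b, LinearMap.range (W s : E s →ₗ[ℂ] H) : Submodule ℂ H) := by
    intro a b r h1 h2 z
    exact Submodule.mem_iSup_of_mem r
      (Submodule.mem_iSup_of_mem (Set.mem_Icc.mpr ⟨h1, h2⟩) (LinearMap.mem_range_self _ z))
  have hPA : ∀ a b (v : H), (∀ r, a ≤ r → r ≤ b → adjoint (W r) v = 0) →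
      orthProjCl (⨆ r ∈ Set.Icc a b, LinearMap.range (W r : E r →ₗ[ℂ] H)) v = 0 := by
    intro a b v hv
    apply orthProjCl_eq_zero
    rw [Submodule.mem_orthogonal]
    intro u hu
    have hle : (⨆ s ∈ Set.Icc a b, LinearMap.range (W s : E s →ₗ[ℂ] H) : Submodule ℂ H) ≤
        LinearMap.ker ((innerSL ℂ v : H →L[ℂ] ℂ) : H →ₗ[ℂ] ℂ) := by
      refine iSup₂_le fun r hr => ?_
      rintro _ ⟨z, rfl⟩
      rw [LinearMap.mem_ker]
      have h1 : (inner ℂ (W r z) v : ℂ) = 0 := by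
        rw [← adjoint_inner_right, hv r hr.1 hr.2, inner_zero_right]
      have h2 : (inner ℂ v (W r z) : ℂ) = 0 := inner_eq_zero_symm.mp h1
      simpa [innerSL_apply_apply] using h2
    have h2 := hle hu
    rw [LinearMap.mem_ker] at h2
    have h3 : (inner ℂ v u : ℂ) = 0 := by simpa [innerSL_apply_apply] using h2
    exact inner_eq_zero_symm.mp h3
  have hPB : ∀ a b r, a ≤ r → r ≤ b → ∀ v : H,
      adjoint (W r) (orthProjCl (⨆ s ∈ Set.Icc a b, LinearMap.range (W s : E s →ₗ[ℂ] H)) v)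
        = adjoint (W r) v := by
    intro a b r ha hb v
    refine ext_inner_left ℂ fun z => ?_
    rw [adjoint_inner_right, adjoint_inner_right]
    have h1 := sub_orthProjCl_mem (⨆ s ∈ Set.Icc a b, LinearMap.range (W s : E s →ₗ[ℂ] H)) v
    have h2 : W r z ∈ (⨆ s ∈ Set.Icc a b,
        LinearMap.range (W s : E s →ₗ[ℂ] H) : Submodule ℂ H).topologicalClosure :=
      Submodule.le_topologicalClosure _ (hmemS a b r ha hb z)
    have h3 := Submodule.inner_right_of_mem_orthogonal h2 h1
    rw [inner_sub_right, sub_eq_zero] at h3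
    exact h3.symm
  have hPG : ∀ a b t m, a ≤ m → m ≤ b →
      (∀ r, r ∈ Set.Icc a b → ∀ z : E r,
        adjoint (W t) (W r z) = adjoint (W t) (W m (adjoint (W m) (W r z)))) →
      ∀ v : H, adjoint (W t) (orthProjCl (⨆ s ∈ Set.Icc a b, LinearMap.range (W s : E s →ₗ[ℂ] H)) v)
        = adjoint (W t) (W m (adjoint (W m) v)) := by
    intro a b t m hm1 hm2 hag v
    have hker : (⨆ s ∈ Set.Icc a b, LinearMap.range (W s : E s →ₗ[ℂ] H) : Submodule ℂ H) ≤
        LinearMap.ker ((adjoint (W t) - adjoint (W t) ∘L (W m ∘L adjoint (W m)) : H →L[ℂ] E t) :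
            H →ₗ[ℂ] E t) := by
      refine iSup₂_le fun r hr => ?_
      rintro _ ⟨z, rfl⟩
      rw [LinearMap.mem_ker]
      have h := hag r hr z
      show adjoint (W t) (W r z) - adjoint (W t) (W m (adjoint (W m) (W r z))) = 0
      rw [← h, sub_self]
    have h1 := orthProjCl_congr_comp hker v
    simp only [ContinuousLinearMap.comp_apply] at h1
    rw [h1, hPB a b m hm1 hm2 v]
  have part2' : ∀ a b c, c ≤ b → b ≤ a → ∀ z : H, pMinus b (adjoint (W b) z) = 0 →
      pMinus a (adjoint (W a)
        (orthProjCl (⨆ s ∈ Set.Icc c b, LinearMap.range (W s : E s →ₗ[ℂ] H)) z)) = 0 := by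
    intro a b c hcb hba z hz
    rw [hPG c b a b hcb (le_refl b) (fun r hr u => hmodp a b r hr.2 hba u) z]
    exact g4 a b hba _ hz
  refine ⟨?_, ?_, ?_, ?_, ?_, ?_⟩
  · -- (1) P_{(ij)} q_{k+} = 0
    ext x
    simp only [Pmodel, qmap, ContinuousLinearMap.comp_apply, ContinuousLinearMap.sub_apply,
      ContinuousLinearMap.one_apply, ContinuousLinearMap.zero_apply]
    rw [hana' i k (le_trans hkj hji) (adjoint (W k) x), map_zero (W i), sub_zero]
    apply hPA j i
    intro r hr1 hr2
    have d0 : pMinus j (adjoint (W j) (W k (pPlus k (adjoint (W k) x)))) = 0 :=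
      hana' j k hkj _
    rw [g6 j _ d0, map_sub, ← hmodp r j k hkj hr1 (pPlus k (adjoint (W k) x)), sub_self]
  · -- (2) q_{i-} P_{(jk)} = 0
    ext x
    simp only [Pmodel, qmap, ContinuousLinearMap.comp_apply, ContinuousLinearMap.sub_apply,
      ContinuousLinearMap.one_apply, ContinuousLinearMap.zero_apply]
    rw [part2' i j k hkj hji _ (hKeyM j k hkj x), map_zero (W i)]
  · -- (3) P_{(ij)} P_{(kl)} = 0
    ext x
    simp only [Pmodel, qmap, ContinuousLinearMap.comp_apply, ContinuousLinearMap.sub_apply,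
      ContinuousLinearMap.one_apply, ContinuousLinearMap.zero_apply]
    set Z1 := x - W k (pMinus k (adjoint (W k) x)) with hZ1
    set Z := Z1 - W l (pPlus l (adjoint (W l) Z1)) with hZdef
    set Y := orthProjCl (⨆ r ∈ Set.Icc l k, LinearMap.range (W r : E r →ₗ[ℂ] H)) Z with hY
    have ck : pMinus k (adjoint (W k) Z) = 0 := by
      have h := hKeyM k l hlk x
      rw [← hZ1, ← hZdef] at h
      exact h
    have e1 : pMinus i (adjoint (W i) Y) = 0 := by
      rw [hY]
      exact part2' i k l hlk (le_trans hkj hji) Z ck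
    rw [e1, map_zero (W i), sub_zero]
    apply hPA j i
    intro r hr1 hr2
    have eyr : adjoint (W r) Y = adjoint (W r) (W k (adjoint (W k) Z)) := by
      rw [hY]
      exact hPG l k r k hlk (le_refl k)
        (fun s hs u => hmodp r k s hs.2 (le_trans hkj hr1) u) Z
    have eyj : adjoint (W j) Y = adjoint (W j) (W k (adjoint (W k) Z)) := by
      rw [hY]
      exact hPG l k j k hlk (le_refl k) (fun s hs u => hmodp j k s hs.2 hkj u) Z
    have d0 : pMinus j (adjoint (W j) (W k (adjoint (W k) Z))) = 0 := g4 j k hkj _ ck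
    rw [map_sub, eyr, eyj, g6 j _ d0, ← hmodp r j k hkj hr1 (adjoint (W k) Z), sub_self]
  · -- (4) P_{(ik)} P_{(jk)} = P_{(jk)}
    ext x
    simp only [Pmodel, qmap, ContinuousLinearMap.comp_apply, ContinuousLinearMap.sub_apply,
      ContinuousLinearMap.one_apply]
    set Z1 := x - W j (pMinus j (adjoint (W j) x)) with hZ1
    set Z := Z1 - W k (pPlus k (adjoint (W k) Z1)) with hZdef
    set Y := orthProjCl (⨆ r ∈ Set.Icc k j, LinearMap.range (W r : E r →ₗ[ℂ] H)) Z with hY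
    have hz : pMinus j (adjoint (W j) Z) = 0 := by
      have h := hKeyM j k hkj x
      rw [← hZ1, ← hZdef] at h
      exact h
    have e1 : pMinus i (adjoint (W i) Y) = 0 := by
      rw [hY]
      exact part2' i j k hkj hji Z hz
    rw [e1, map_zero (W i), sub_zero]
    have e2 : pPlus k (adjoint (W k) Y) = 0 := by
      rw [hY, hPB k j k (le_refl k) hkj Z, hZdef]
      exact g1 k Z1
    rw [e2, map_zero (W k), sub_zero]
    apply orthProjCl_eq_self
    have hmem := orthProjCl_apply_mem (⨆ r ∈ Set.Icc k j, LinearMap.range (W r : E r →ₗ[ℂ] H)) Z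
    have hmono : (⨆ r ∈ Set.Icc k j,
          LinearMap.range (W r : E r →ₗ[ℂ] H) : Submodule ℂ H).topologicalClosure ≤
        (⨆ r ∈ Set.Icc k i, LinearMap.range (W r : E r →ₗ[ℂ] H)).topologicalClosure := by
      apply Submodule.topologicalClosure_mono
      exact biSup_mono fun s hs => Set.mem_Icc.mpr ⟨(Set.mem_Icc.mp hs).1,
        le_trans (Set.mem_Icc.mp hs).2 hji⟩
    rw [hY]
    exact hmono hmem
  · -- (5) P_{(ij)} P_{(ik)} = P_{(ij)}
    ext x
    simp only [Pmodel, qmap, ContinuousLinearMap.comp_apply, ContinuousLinearMap.sub_apply,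
      ContinuousLinearMap.one_apply]
    set Z1 := x - W i (pMinus i (adjoint (W i) x)) with hZ1
    set g := pPlus k (adjoint (W k) Z1) with hg
    set Z := Z1 - W k g with hZdef
    set Y := orthProjCl (⨆ r ∈ Set.Icc k i, LinearMap.range (W r : E r →ₗ[ℂ] H)) Z with hY
    have e1 : pMinus i (adjoint (W i) Y) = 0 := by
      rw [hY, hPB k i i (le_trans hkj hji) (le_refl i) Z, hZdef, hg, hZ1]
      exact hKeyM i k (le_trans hkj hji) x
    rw [e1, map_zero (W i), sub_zero]
    have e2 : adjoint (W j) Y = adjoint (W j) Z := by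
      rw [hY]
      exact hPB k i j hkj hji Z
    rw [e2, ← sub_eq_zero, ← map_sub]
    apply hPA j i
    intro r hr1 hr2
    have eyr : adjoint (W r) Y = adjoint (W r) Z := by
      rw [hY]
      exact hPB k i r (le_trans hkj hr1) hr2 Z
    have hg6 : pPlus j (adjoint (W j) (W k g)) = adjoint (W j) (W k g) := by
      rw [hg]
      exact g6 j _ (hana' j k hkj (adjoint (W k) Z1))
    have h2 : pPlus j (adjoint (W j) Z)
        = pPlus j (adjoint (W j) Z1) - adjoint (W j) (W k g) := by
      rw [hZdef, map_sub, map_sub, hg6]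
    have h3 : adjoint (W r) Z = adjoint (W r) Z1 - adjoint (W r) (W k g) := by
      rw [hZdef, map_sub]
    simp only [map_sub, eyr, h3, h2, ← hmodp r j k hkj hr1]
    abel
  · -- (6) P_{(jk)} P_{(ij)} = 0
    ext x
    simp only [Pmodel, qmap, ContinuousLinearMap.comp_apply, ContinuousLinearMap.sub_apply,
      ContinuousLinearMap.one_apply, ContinuousLinearMap.zero_apply]
    set M1 := x - W i (pMinus i (adjoint (W i) x)) with hM1
    set bb := pPlus j (adjoint (W j) M1) with hbb
    set M := M1 - W j bb with hM
    set Y := orthProjCl (⨆ r ∈ Set.Icc j i, LinearMap.range (W r : E r →ₗ[ℂ] H)) M with hY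
    have key : ∀ t, t ≤ j → adjoint (W t) Y = adjoint (W t) (W j (adjoint (W j) M)) := by
      intro t ht
      rw [hY]
      exact hPG j i t j (le_refl j) hji (fun r hr u => hmodq t j r ht hr.1 u) M
    have ha : adjoint (W j) M = adjoint (W j) M1 - bb := by
      rw [hM, map_sub, hW1]
    have hmm2 : pMinus j (adjoint (W j) M) = adjoint (W j) M := by
      rw [ha, map_sub, hbb, hpmp j _, sub_zero, ← hMsub j _]
    have h6 : pMinus j (adjoint (W j) Y) = adjoint (W j) M := by
      rw [key j (le_refl j), hW1, hmm2]
    rw [h6]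
    have hty : ∀ t, t ≤ j → adjoint (W t) (Y - W j (adjoint (W j) M)) = 0 := by
      intro t ht
      rw [map_sub, key t ht, sub_self]
    rw [hty k hkj, map_zero (pPlus k), map_zero (W k), sub_zero]
    apply hPA k j
    intro s hs1 hs2
    exact hty s hs2
end

section
/- In an n-model, the subspaces K_{(ij)} := Ran P_{(ij)} satisfy: K_{(ij)} ⊆ H_{ij+}, K_{(jk)} ⊆ K_{(ik)}, and H_{jk+} ⊆ H_{il+} for i ≥ j ≥ k ≥ l, where H_{ij} = ⋁_{j ≤ r ≤ i} Ran π_r and H_{ij+} := H_{ij} ∩ Ker q_{i−}. -/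
open ContinuousLinearMap

section MyAux
variable {H : Type*} [NormedAddCommGroup H] [InnerProductSpace ℂ H] [CompleteSpace H]

lemma my_orthProjCl_mem (S : Submodule ℂ H) (x : H) :
    orthProjCl S x ∈ S.topologicalClosure := by
  haveI : CompleteSpace S.topologicalClosure :=
    S.isClosed_topologicalClosure.completeSpace_coe
  exact SetLike.coe_mem _

lemma my_orthProjCl_eq_self (S : Submodule ℂ H) {x : H} (hx : x ∈ S.topologicalClosure) :
    orthProjCl S x = x := by
  haveI : CompleteSpace S.topologicalClosure :=
    S.isClosed_topologicalClosure.completeSpace_coe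
  show (↑(S.topologicalClosure.orthogonalProjectionOnto x) : H) = x
  rw [show x = ((⟨x, hx⟩ : S.topologicalClosure) : H) from rfl,
    Submodule.orthogonalProjectionOnto_mem_subspace_eq_self]

lemma my_adjoint_orthProjCl {F : Type*} [NormedAddCommGroup F] [InnerProductSpace ℂ F]
    [CompleteSpace F] (W : F →L[ℂ] H) (S : Submodule ℂ H)
    (hS : LinearMap.range (W : F →ₗ[ℂ] H) ≤ S) (x : H) :
    adjoint W (orthProjCl S x) = adjoint W x := by
  haveI : CompleteSpace S.topologicalClosure :=
    S.isClosed_topologicalClosure.completeSpace_coe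
  have hmem : x - orthProjCl S x ∈ (S.topologicalClosure)ᗮ :=
    Submodule.sub_starProjection_mem_orthogonal (K := S.topologicalClosure) x
  have h0 : adjoint W (x - orthProjCl S x) = 0 := by
    have := (Submodule.mem_orthogonal' _ _).mp hmem
      (W (adjoint W (x - orthProjCl S x)))
      (S.le_topologicalClosure (hS (LinearMap.mem_range_self _ _)))
    rw [← adjoint_inner_left] at this
    exact inner_self_eq_zero.mp this
  rw [map_sub] at h0
  exact (sub_eq_zero.mp h0).symm

end MyAux

section MyMain
variable {ι : Type*} [LinearOrder ι]
  {H : Type*} [NormedAddCommGroup H] [InnerProductSpace ℂ H] [CompleteSpace H]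
  {E : ι → Type*} [∀ r, NormedAddCommGroup (E r)] [∀ r, InnerProductSpace ℂ (E r)]
  [∀ r, CompleteSpace (E r)]
  (W : ∀ r, E r →L[ℂ] H) (pPlus pMinus : ∀ r, E r →L[ℂ] E r)

/-- Claim A: `q_{i-}(1 - q_{j-})` vanishes on the closure of `⋁_{k≤r≤j} Ran W_r`. -/
lemma my_claimA
    (hsum : ∀ r, pPlus r + pMinus r = 1)
    (hana : ∀ i j, j ≤ i → pMinus i ∘L (adjoint (W i) ∘L W j) ∘L pPlus j = 0)
    (hmod : ∀ i j k, k ≤ j → j ≤ i →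
      adjoint (W i) ∘L W k = (adjoint (W i) ∘L W j) ∘L (adjoint (W j) ∘L W k))
    (i j k : ι) (hkj : k ≤ j) (hji : j ≤ i) {x : H}
    (hx : x ∈ (⨆ r ∈ Set.Icc k j, LinearMap.range (W r : E r →ₗ[ℂ] H)).topologicalClosure)
    (hker : qmap W pMinus j x = 0) :
    qmap W pMinus i x = 0 := by
  set A : H →L[ℂ] H := qmap W pMinus i ∘L (1 - qmap W pMinus j) with hA
  have hgen : (⨆ r ∈ Set.Icc k j, LinearMap.range (W r : E r →ₗ[ℂ] H)) ≤ LinearMap.ker (A : H →ₗ[ℂ] H) := by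
    refine iSup₂_le fun r hr => ?_
    rintro _ ⟨e, rfl⟩
    have hmodpt := ContinuousLinearMap.ext_iff.mp (hmod i j r hr.2 hji) e
    simp only [comp_apply] at hmodpt
    set u := adjoint (W j) (W r e) with hu
    have hsum' : u - pMinus j u = pPlus j u := by
      have h1 := ContinuousLinearMap.ext_iff.mp (hsum j) u
      simp only [add_apply, ContinuousLinearMap.one_apply] at h1
      exact sub_eq_of_eq_add h1.symm
    have hana' : pMinus i (adjoint (W i) (W j (pPlus j u))) = 0 := by
      have := ContinuousLinearMap.ext_iff.mp (hana i j hji) u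
      simpa using this
    show A (W r e) = 0
    simp only [hA, qmap, comp_apply, sub_apply, ContinuousLinearMap.one_apply]
    rw [map_sub (adjoint (W i)), hmodpt, ← map_sub (adjoint (W i)),
      ← map_sub (W j), hsum', hana', map_zero]
  have hcl : (⨆ r ∈ Set.Icc k j, LinearMap.range (W r : E r →ₗ[ℂ] H)).topologicalClosure
      ≤ LinearMap.ker (A : H →ₗ[ℂ] H) :=
    Submodule.topologicalClosure_minimal _ hgen (ContinuousLinearMap.isClosed_ker A)
  have hAx : A x = 0 := hcl hx
  simp only [hA, comp_apply, sub_apply, ContinuousLinearMap.one_apply, hker, sub_zero] at hAx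
  exact hAx

/-- `q_{i-} ∘ P_{(ij)} = 0` pointwise. -/
lemma my_qminus_P
    (hiso : ∀ r, ∀ x, ‖W r x‖ = ‖x‖)
    (hidemM : ∀ r, pMinus r ∘L pMinus r = pMinus r)
    (hana : ∀ i j, j ≤ i → pMinus i ∘L (adjoint (W i) ∘L W j) ∘L pPlus j = 0)
    (i j : ι) (hji : j ≤ i) (x : H) :
    qmap W pMinus i (Pmodel W pPlus pMinus i j x) = 0 := by
  have hWW : adjoint (W i) ∘L W i = 1 := (norm_map_iff_adjoint_comp_self (W i)).mp (hiso i)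
  have hrange : LinearMap.range (W i : E i →ₗ[ℂ] H) ≤ ⨆ r ∈ Set.Icc j i, LinearMap.range (W r : E r →ₗ[ℂ] H) :=
    le_iSup₂_of_le i ⟨hji, le_refl i⟩ le_rfl
  set x' : H := x - W i (pMinus i (adjoint (W i) x)) with hx'
  have hP : Pmodel W pPlus pMinus i j x
      = orthProjCl (⨆ r ∈ Set.Icc j i, LinearMap.range (W r : E r →ₗ[ℂ] H))
          (x' - W j (pPlus j (adjoint (W j) x'))) := by
    simp only [Pmodel, qmap, comp_apply, sub_apply, ContinuousLinearMap.one_apply]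
    rfl
  rw [hP]
  simp only [qmap, comp_apply]
  rw [my_adjoint_orthProjCl (W i) _ hrange]
  rw [map_sub (adjoint (W i)), map_sub (pMinus i)]
  have hana' : pMinus i (adjoint (W i) (W j (pPlus j (adjoint (W j) x')))) = 0 := by
    have := ContinuousLinearMap.ext_iff.mp (hana i j hji) (adjoint (W j) x')
    simpa using this
  rw [hana', sub_zero, hx']
  rw [map_sub (adjoint (W i))]
  have hWWpt : adjoint (W i) (W i (pMinus i (adjoint (W i) x)))
      = pMinus i (adjoint (W i) x) := by
    have := ContinuousLinearMap.ext_iff.mp hWW (pMinus i (adjoint (W i) x))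
    simpa using this
  rw [hWWpt, map_sub (pMinus i)]
  have hidem' : pMinus i (pMinus i (adjoint (W i) x)) = pMinus i (adjoint (W i) x) := by
    have := ContinuousLinearMap.ext_iff.mp (hidemM i) (adjoint (W i) x)
    simpa using this
  rw [hidem', sub_self, map_zero]

/-- `q_{j+} ∘ P_{(ij)} = 0` pointwise. -/
lemma my_qplus_P
    (hiso : ∀ r, ∀ x, ‖W r x‖ = ‖x‖)
    (hidemP : ∀ r, pPlus r ∘L pPlus r = pPlus r)
    (i j : ι) (hji : j ≤ i) (x : H) :
    qmap W pPlus j (Pmodel W pPlus pMinus i j x) = 0 := by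
  have hWW : adjoint (W j) ∘L W j = 1 := (norm_map_iff_adjoint_comp_self (W j)).mp (hiso j)
  have hrange : LinearMap.range (W j : E j →ₗ[ℂ] H) ≤ ⨆ r ∈ Set.Icc j i, LinearMap.range (W r : E r →ₗ[ℂ] H) :=
    le_iSup₂_of_le j ⟨le_refl j, hji⟩ le_rfl
  set x' : H := x - W i (pMinus i (adjoint (W i) x)) with hx'
  have hP : Pmodel W pPlus pMinus i j x
      = orthProjCl (⨆ r ∈ Set.Icc j i, LinearMap.range (W r : E r →ₗ[ℂ] H))
          (x' - W j (pPlus j (adjoint (W j) x'))) := by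
    simp only [Pmodel, qmap, comp_apply, sub_apply, ContinuousLinearMap.one_apply]
    rfl
  rw [hP]
  simp only [qmap, comp_apply]
  rw [my_adjoint_orthProjCl (W j) _ hrange]
  rw [map_sub (adjoint (W j))]
  have hWWpt : adjoint (W j) (W j (pPlus j (adjoint (W j) x')))
      = pPlus j (adjoint (W j) x') := by
    have := ContinuousLinearMap.ext_iff.mp hWW (pPlus j (adjoint (W j) x'))
    simpa using this
  rw [hWWpt, map_sub (pPlus j)]
  have hidem' : pPlus j (pPlus j (adjoint (W j) x')) = pPlus j (adjoint (W j) x') := by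
    have := ContinuousLinearMap.ext_iff.mp (hidemP j) (adjoint (W j) x')
    simpa using this
  rw [hidem', sub_self, map_zero]

end MyMain

/-- In an n-model, with `K_{(ij)} = Ran P_{(ij)}`,
`H_{ij} = ⋁_{j≤r≤i} Ran π_r` and `H_{ij+} = H_{ij} ∩ Ker q_{i−}`, one has for
`i ≥ j ≥ k ≥ l`: `K_{(ij)} ⊆ H_{ij+}`, `K_{(jk)} ⊆ K_{(ik)}`, `H_{jk+} ⊆ H_{il+}`. -/
theorem model_Kij_inclusions
    {ι : Type*} [LinearOrder ι]
    {H : Type*} [NormedAddCommGroup H] [InnerProductSpace ℂ H] [CompleteSpace H]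
    {E : ι → Type*} [∀ r, NormedAddCommGroup (E r)] [∀ r, InnerProductSpace ℂ (E r)]
    [∀ r, CompleteSpace (E r)]
    (W : ∀ r, E r →L[ℂ] H) (pPlus pMinus : ∀ r, E r →L[ℂ] E r)
    (hiso : ∀ r, ∀ x, ‖W r x‖ = ‖x‖)
    (hsum : ∀ r, pPlus r + pMinus r = 1)
    (hidemP : ∀ r, pPlus r ∘L pPlus r = pPlus r)
    (hidemM : ∀ r, pMinus r ∘L pMinus r = pMinus r)
    (hana : ∀ i j, j ≤ i → pMinus i ∘L (adjoint (W i) ∘L W j) ∘L pPlus j = 0)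
    (hmod : ∀ i j k, k ≤ j → j ≤ i →
      adjoint (W i) ∘L W k = (adjoint (W i) ∘L W j) ∘L (adjoint (W j) ∘L W k))
    (i j k l : ι) (hji : j ≤ i) (hkj : k ≤ j) (hlk : l ≤ k) :
    LinearMap.range (Pmodel W pPlus pMinus i j : H →ₗ[ℂ] H)
        ≤ (⨆ r ∈ Set.Icc j i, LinearMap.range (W r : E r →ₗ[ℂ] H)).topologicalClosure
            ⊓ LinearMap.ker (qmap W pMinus i : H →ₗ[ℂ] H)
      ∧ LinearMap.range (Pmodel W pPlus pMinus j k : H →ₗ[ℂ] H)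
          ≤ LinearMap.range (Pmodel W pPlus pMinus i k : H →ₗ[ℂ] H)
      ∧ (⨆ r ∈ Set.Icc k j, LinearMap.range (W r : E r →ₗ[ℂ] H)).topologicalClosure
            ⊓ LinearMap.ker (qmap W pMinus j : H →ₗ[ℂ] H)
          ≤ (⨆ r ∈ Set.Icc l i, LinearMap.range (W r : E r →ₗ[ℂ] H)).topologicalClosure
            ⊓ LinearMap.ker (qmap W pMinus i : H →ₗ[ℂ] H) := by
  have hki : k ≤ i := le_trans hkj hji
  refine ⟨?_, ?_, ?_⟩
  · -- Part 1
    rintro _ ⟨x, rfl⟩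
    refine ⟨?_, ?_⟩
    · exact my_orthProjCl_mem _ _
    · exact my_qminus_P W pPlus pMinus hiso hidemM hana i j hji x
  · -- Part 2
    rintro _ ⟨x, rfl⟩
    set y := Pmodel W pPlus pMinus j k x with hy
    have hymem : y ∈ (⨆ r ∈ Set.Icc k j, LinearMap.range (W r : E r →ₗ[ℂ] H)).topologicalClosure :=
      my_orthProjCl_mem _ _
    have hyqj : qmap W pMinus j y = 0 :=
      my_qminus_P W pPlus pMinus hiso hidemM hana j k hkj x
    have hyqi : qmap W pMinus i y = 0 :=
      my_claimA W pPlus pMinus hsum hana hmod i j k hkj hji hymem hyqj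
    have hyqk : qmap W pPlus k y = 0 :=
      my_qplus_P W pPlus pMinus hiso hidemP j k hkj x
    refine ⟨y, ?_⟩
    have hmono : (⨆ r ∈ Set.Icc k j, LinearMap.range (W r : E r →ₗ[ℂ] H)).topologicalClosure
        ≤ (⨆ r ∈ Set.Icc k i, LinearMap.range (W r : E r →ₗ[ℂ] H)).topologicalClosure := by
      apply Submodule.topologicalClosure_mono
      exact iSup₂_le fun r hr => le_iSup₂_of_le r ⟨hr.1, le_trans hr.2 hji⟩ le_rfl
    have : Pmodel W pPlus pMinus i k y
        = orthProjCl (⨆ r ∈ Set.Icc k i, LinearMap.range (W r : E r →ₗ[ℂ] H)) y := by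
      simp only [Pmodel, comp_apply, sub_apply, ContinuousLinearMap.one_apply, hyqi, sub_zero, hyqk]
    change (Pmodel W pPlus pMinus i k) y = y
    rw [this, my_orthProjCl_eq_self _ (hmono hymem)]
  · -- Part 3
    rintro x ⟨hx1, hx2⟩
    have hx2' : qmap W pMinus j x = 0 := hx2
    refine ⟨?_, ?_⟩
    · refine Submodule.topologicalClosure_mono ?_ hx1
      exact iSup₂_le fun r hr =>
        le_iSup₂_of_le r ⟨le_trans hlk hr.1, le_trans hr.2 hji⟩ le_rfl
    · exact my_claimA W pPlus pMinus hsum hana hmod i j k hkj hji hx1 hx2'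
end
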